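/- arXiv:2308.09173 — 2 statements merged into one kernel-verified Lean document; each statement's English description precedes it below -/
import Mathlib

section
/- Every irreducible root system of type different from A₁ and from C_n (n ≥ 2) contains a pair of linearly independent, non-orthogonal long roots. -/
open RealInnerProductSpace

/-- The standard basis vector `ε_i` of Euclidean space. -/
noncomputable def stdVec {n : ℕ} (i : Fin n) : EuclideanSpace ℝ (Fin n) :=
  EuclideanSpace.single i (1 : ℝ)

/-- The roots `±ε_μ ± ε_ν` (μ ≠ ν); this is the root system of type `D_n`. -/
noncomputable def rootsDn (n : ℕ) : Set (EuclideanSpace ℝ (Fin n)) :=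
  {v | ∃ i j : Fin n, ∃ s t : ℝ, i ≠ j ∧ (s = 1 ∨ s = -1) ∧ (t = 1 ∨ t = -1) ∧
    v = s • stdVec i + t • stdVec j}

/-- The root system of type `A_n` realized in `ℝ^{n+1}`. -/
noncomputable def rootsAn (n : ℕ) : Set (EuclideanSpace ℝ (Fin (n + 1))) :=
  {v | ∃ i j : Fin (n + 1), i ≠ j ∧ v = stdVec i - stdVec j}

/-- The root system of type `B_n`: `{±ε_μ ± ε_ν} ∪ {±ε_μ}`. -/
noncomputable def rootsBn (n : ℕ) : Set (EuclideanSpace ℝ (Fin n)) :=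
  rootsDn n ∪ {v | ∃ i : Fin n, ∃ s : ℝ, (s = 1 ∨ s = -1) ∧ v = s • stdVec i}

/-- The root system of type `C_n`: `{±ε_μ ± ε_ν} ∪ {±2ε_μ}`. -/
noncomputable def rootsCn (n : ℕ) : Set (EuclideanSpace ℝ (Fin n)) :=
  rootsDn n ∪ {v | ∃ i : Fin n, ∃ s : ℝ, (s = 2 ∨ s = -2) ∧ v = s • stdVec i}

/-- The half-integer roots of `E₈`: vectors with all coordinates `±1/2` and an
even number of minus signs (equivalently, positive product of coordinates). -/
def halfRootsE8 : Set (EuclideanSpace ℝ (Fin 8)) :=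
  {v | (∀ i, v i = 1/2 ∨ v i = -1/2) ∧ 0 < ∏ i, v i}

/-- The root system of type `E₈` in `ℝ^8`. -/
noncomputable def rootsE8 : Set (EuclideanSpace ℝ (Fin 8)) :=
  rootsDn 8 ∪ halfRootsE8

/-- The root system of type `E₇`, realized as the roots of `E₈` orthogonal to
`ε₇ + ε₈` (in `0`-indexed notation `ε_6 + ε_7`). -/
noncomputable def rootsE7 : Set (EuclideanSpace ℝ (Fin 8)) :=
  {v ∈ rootsE8 | ⟪v, stdVec 6 + stdVec 7⟫ = 0}

/-- The root system of type `E₆`, realized as the roots of `E₇` orthogonal in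
addition to `ε₆ − ε₇` (in `0`-indexed notation `ε_5 - ε_6`). -/
noncomputable def rootsE6 : Set (EuclideanSpace ℝ (Fin 8)) :=
  {v ∈ rootsE7 | ⟪v, stdVec 5 - stdVec 6⟫ = 0}

/-- The root system of type `F₄` in `ℝ⁴`:
`{±ε_μ ± ε_ν} ∪ {±ε_μ} ∪ {(±1/2, ±1/2, ±1/2, ±1/2)}`. -/
noncomputable def rootsF4 : Set (EuclideanSpace ℝ (Fin 4)) :=
  rootsBn 4 ∪ {v | ∀ i, v i = 1/2 ∨ v i = -1/2}

/-- The root system of type `G₂`, realized in the hyperplane of `ℝ³`: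
short roots `ε_i − ε_j` and long roots `±(2ε_i − ε_j − ε_k)`. -/
noncomputable def rootsG2 : Set (EuclideanSpace ℝ (Fin 3)) :=
  {v | ∃ i j : Fin 3, i ≠ j ∧ v = stdVec i - stdVec j} ∪
  {v | ∃ i j k : Fin 3, i ≠ j ∧ i ≠ k ∧ j ≠ k ∧
    (v = (2 : ℝ) • stdVec i - stdVec j - stdVec k ∨
     v = -((2 : ℝ) • stdVec i - stdVec j - stdVec k))}

/-- The types of irreducible root systems. -/
inductive RSType : Type
  | A : ℕ → RSType
  | B : ℕ → RSType
  | C : ℕ → RSType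
  | D : ℕ → RSType
  | E6 : RSType
  | E7 : RSType
  | E8 : RSType
  | F4 : RSType
  | G2 : RSType

/-- The dimension of the ambient Euclidean space used in our realization. -/
def RSType.dim : RSType → ℕ
  | .A n => n + 1
  | .B n => n
  | .C n => n
  | .D n => n
  | .E6 => 8
  | .E7 => 8
  | .E8 => 8
  | .F4 => 4
  | .G2 => 3

/-- Rank restrictions so that the listed types are exactly the irreducible root
systems, each appearing once (`A_n, n ≥ 1`; `B_n, n ≥ 3`; `C_n, n ≥ 2`;
`D_n, n ≥ 3`; the exceptional types). -/
def RSType.valid : RSType → Prop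
  | .A n => 1 ≤ n
  | .B n => 3 ≤ n
  | .C n => 2 ≤ n
  | .D n => 3 ≤ n
  | _ => True

/-- The set of roots of each type, in the concrete realization. -/
noncomputable def RSType.roots : (t : RSType) → Set (EuclideanSpace ℝ (Fin t.dim))
  | .A n => rootsAn n
  | .B n => rootsBn n
  | .C n => rootsCn n
  | .D n => rootsDn n
  | .E6 => rootsE6
  | .E7 => rootsE7
  | .E8 => rootsE8
  | .F4 => rootsF4
  | .G2 => rootsG2

/-- The long roots of a root system: the roots of maximal length. -/
noncomputable def longRoots {m : ℕ} (Δ : Set (EuclideanSpace ℝ (Fin m))) :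
    Set (EuclideanSpace ℝ (Fin m)) :=
  {v | v ∈ Δ ∧ ∀ w ∈ Δ, ‖w‖ ≤ ‖v‖}

/-!
Outside `G₂` every root has squared length at most `2`, while `ε₀ - ε₁` and `ε₀ - ε₂` are roots
of squared length `2` (in types `B`, `E`, `F` they come from the `D`-part, and they are orthogonal
to the vectors cutting `E₇` and `E₆` out of `E₈`). Their inner product `1` lies strictly between
`0` and the product `2` of their lengths, so by the equality case of Cauchy–Schwarz they are
independent. In `G₂` the same works with the long roots `2ε₀ - ε₁ - ε₂` and `2ε₁ - ε₀ - ε₂`,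
of squared length `6` and inner product `-3`.
-/

theorem linearIndependent_pair_of_abs_real_inner_lt {F : Type*} [NormedAddCommGroup F]
    [InnerProductSpace ℝ F] {x y : F} (h : |⟪x, y⟫| < ‖x‖ * ‖y‖) :
    LinearIndependent ℝ ![x, y] := by
  have hx : x ≠ 0 := by
    rintro rfl
    simp at h
  rw [LinearIndependent.pair_iff' hx]
  rintro a rfl
  rw [real_inner_smul_self_right, norm_smul, Real.norm_eq_abs, abs_mul,
    abs_mul_self ‖x‖] at h
  linarith

theorem exists_three_ne {n : ℕ} (hn : 3 ≤ n) : ∃ i j k : Fin n, i ≠ j ∧ i ≠ k ∧ j ≠ k :=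
  ⟨⟨0, by omega⟩, ⟨1, by omega⟩, ⟨2, by omega⟩, by simp [Fin.ext_iff]⟩

section StdVec

variable {n : ℕ}

@[simp]
theorem inner_stdVec_stdVec (i j : Fin n) : ⟪stdVec i, stdVec j⟫ = if i = j then 1 else 0 := by
  simp [stdVec, EuclideanSpace.inner_single_left]

theorem norm_sq_stdVec_sub_stdVec {i j : Fin n} (hij : i ≠ j) :
    ‖stdVec i - stdVec j‖ ^ 2 = 2 := by
  rw [← real_inner_self_eq_norm_sq]
  simp only [inner_sub_left, inner_sub_right, inner_stdVec_stdVec, hij, hij.symm, ↓reduceIte]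
  norm_num

theorem inner_stdVec_sub_stdVec_stdVec_sub_stdVec {i j k : Fin n} (hij : i ≠ j) (hik : i ≠ k)
    (hjk : j ≠ k) : ⟪stdVec i - stdVec j, stdVec i - stdVec k⟫ = 1 := by
  simp only [inner_sub_left, inner_sub_right, inner_stdVec_stdVec, hij.symm, hik, hjk,
    ↓reduceIte]
  norm_num

theorem norm_sq_two_smul_stdVec_sub_stdVec_sub_stdVec {i j k : Fin n} (hij : i ≠ j)
    (hik : i ≠ k) (hjk : j ≠ k) : ‖(2 : ℝ) • stdVec i - stdVec j - stdVec k‖ ^ 2 = 6 := by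
  rw [← real_inner_self_eq_norm_sq]
  simp only [inner_sub_left, inner_sub_right, real_inner_smul_left, real_inner_smul_right,
    inner_stdVec_stdVec, hij, hik, hjk, hij.symm, hik.symm, hjk.symm, ↓reduceIte]
  norm_num

theorem norm_sq_of_forall_eq_half_or_eq_neg_half {v : EuclideanSpace ℝ (Fin n)}
    (hv : ∀ i, v i = 1 / 2 ∨ v i = -1 / 2) : ‖v‖ ^ 2 = n / 4 := by
  have hsq : ∀ i, ‖v i‖ ^ 2 = 1 / 4 := fun i => by
    rcases hv i with h | h <;> norm_num [h]
  simp only [EuclideanSpace.norm_sq_eq, hsq, Finset.sum_const, Finset.card_univ, Fintype.card_fin,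
    nsmul_eq_mul]
  ring

end StdVec

def HasNonorthogonalLongRoots {m : ℕ} (Δ : Set (EuclideanSpace ℝ (Fin m))) : Prop :=
  ∃ lam alpha : EuclideanSpace ℝ (Fin m),
    lam ∈ longRoots Δ ∧ alpha ∈ longRoots Δ ∧
    LinearIndependent ℝ ![lam, alpha] ∧ ⟪lam, alpha⟫ ≠ 0

section HasNonorthogonalLongRoots

variable {m : ℕ} {Δ : Set (EuclideanSpace ℝ (Fin m))}

theorem mem_longRoots_of_norm_sq {c : ℝ} {x : EuclideanSpace ℝ (Fin m)} (hx : x ∈ Δ)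
    (hmax : ∀ w ∈ Δ, ‖w‖ ^ 2 ≤ c) (hxc : ‖x‖ ^ 2 = c) : x ∈ longRoots Δ :=
  ⟨hx, fun w hw => (sq_le_sq₀ (norm_nonneg w) (norm_nonneg x)).1 (hxc ▸ hmax w hw)⟩

theorem HasNonorthogonalLongRoots.of_norm_sq {c : ℝ} {x y : EuclideanSpace ℝ (Fin m)}
    (hx : x ∈ Δ) (hy : y ∈ Δ) (hmax : ∀ w ∈ Δ, ‖w‖ ^ 2 ≤ c) (hxc : ‖x‖ ^ 2 = c)
    (hyc : ‖y‖ ^ 2 = c) (hxy : ⟪x, y⟫ ≠ 0) (hlt : |⟪x, y⟫| < c) :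
    HasNonorthogonalLongRoots Δ := by
  have hnorm : ‖x‖ * ‖y‖ = c := by
    rw [(sq_eq_sq₀ (norm_nonneg x) (norm_nonneg y)).1 (hxc.trans hyc.symm), ← sq, hyc]
  exact ⟨x, y, mem_longRoots_of_norm_sq hx hmax hxc, mem_longRoots_of_norm_sq hy hmax hyc,
    linearIndependent_pair_of_abs_real_inner_lt (hnorm ▸ hlt), hxy⟩

theorem HasNonorthogonalLongRoots.of_stdVec_sub_mem (hmax : ∀ w ∈ Δ, ‖w‖ ^ 2 ≤ 2)
    {i j k : Fin m} (hij : i ≠ j) (hik : i ≠ k) (hjk : j ≠ k)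
    (hj : stdVec i - stdVec j ∈ Δ) (hk : stdVec i - stdVec k ∈ Δ) :
    HasNonorthogonalLongRoots Δ := by
  refine .of_norm_sq hj hk hmax (norm_sq_stdVec_sub_stdVec hij) (norm_sq_stdVec_sub_stdVec hik)
    ?_ ?_ <;> norm_num [inner_stdVec_sub_stdVec_stdVec_sub_stdVec hij hik hjk]

end HasNonorthogonalLongRoots

section Roots

variable {n : ℕ} {v : EuclideanSpace ℝ (Fin n)}

theorem stdVec_sub_stdVec_mem_rootsDn {i j : Fin n} (hij : i ≠ j) :
    stdVec i - stdVec j ∈ rootsDn n :=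
  ⟨i, j, 1, -1, hij, .inl rfl, .inr rfl, by rw [one_smul, neg_one_smul, sub_eq_add_neg]⟩

theorem stdVec_sub_stdVec_mem_rootsE6 {i j : Fin 8} (hij : i ≠ j) (hi : i < 5) (hj : j < 5) :
    stdVec i - stdVec j ∈ rootsE6 := by
  have hi' : i ≠ 5 ∧ i ≠ 6 ∧ i ≠ 7 := by omega
  have hj' : j ≠ 5 ∧ j ≠ 6 ∧ j ≠ 7 := by omega
  refine ⟨⟨.inl (stdVec_sub_stdVec_mem_rootsDn hij), ?_⟩, ?_⟩ <;>
    simp [inner_sub_left, inner_add_right, inner_sub_right, hi', hj']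

theorem norm_sq_of_mem_rootsAn {v : EuclideanSpace ℝ (Fin (n + 1))} (hv : v ∈ rootsAn n) :
    ‖v‖ ^ 2 = 2 := by
  obtain ⟨i, j, hij, rfl⟩ := hv
  exact norm_sq_stdVec_sub_stdVec hij

theorem norm_sq_of_mem_rootsDn (hv : v ∈ rootsDn n) : ‖v‖ ^ 2 = 2 := by
  obtain ⟨i, j, s, t, hij, hs, ht, rfl⟩ := hv
  rw [← real_inner_self_eq_norm_sq]
  simp only [inner_add_left, inner_add_right, real_inner_smul_left, real_inner_smul_right,
    inner_stdVec_stdVec, hij, hij.symm, ↓reduceIte]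
  rcases hs with rfl | rfl <;> rcases ht with rfl | rfl <;> norm_num

theorem norm_sq_le_of_mem_rootsBn (hv : v ∈ rootsBn n) : ‖v‖ ^ 2 ≤ 2 := by
  rcases hv with hv | ⟨i, s, hs, rfl⟩
  · exact (norm_sq_of_mem_rootsDn hv).le
  · rcases hs with rfl | rfl <;> norm_num [norm_smul, stdVec]

theorem norm_sq_of_mem_rootsE8 {v : EuclideanSpace ℝ (Fin 8)} (hv : v ∈ rootsE8) :
    ‖v‖ ^ 2 = 2 := by
  rcases hv with hv | ⟨hv, -⟩
  · exact norm_sq_of_mem_rootsDn hv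
  · rw [norm_sq_of_forall_eq_half_or_eq_neg_half hv]
    norm_num

theorem norm_sq_le_of_mem_rootsF4 {v : EuclideanSpace ℝ (Fin 4)} (hv : v ∈ rootsF4) :
    ‖v‖ ^ 2 ≤ 2 := by
  rcases hv with hv | hv
  · exact norm_sq_le_of_mem_rootsBn hv
  · rw [norm_sq_of_forall_eq_half_or_eq_neg_half hv]
    norm_num

theorem norm_sq_le_of_mem_rootsG2 {v : EuclideanSpace ℝ (Fin 3)} (hv : v ∈ rootsG2) :
    ‖v‖ ^ 2 ≤ 6 := by
  rcases hv with ⟨i, j, hij, rfl⟩ | ⟨i, j, k, hij, hik, hjk, rfl | rfl⟩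
  · rw [norm_sq_stdVec_sub_stdVec hij]
    norm_num
  · exact (norm_sq_two_smul_stdVec_sub_stdVec_sub_stdVec hij hik hjk).le
  · rw [norm_neg]
    exact (norm_sq_two_smul_stdVec_sub_stdVec_sub_stdVec hij hik hjk).le

end Roots

theorem hasNonorthogonalLongRoots_rootsAn {n : ℕ} (hn : 2 ≤ n) :
    HasNonorthogonalLongRoots (rootsAn n) :=
  have ⟨_, _, _, hij, hik, hjk⟩ := exists_three_ne (n := n + 1) (by omega)
  .of_stdVec_sub_mem (fun _ hw => (norm_sq_of_mem_rootsAn hw).le) hij hik hjk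
    ⟨_, _, hij, rfl⟩ ⟨_, _, hik, rfl⟩

theorem hasNonorthogonalLongRoots_rootsBn {n : ℕ} (hn : 3 ≤ n) :
    HasNonorthogonalLongRoots (rootsBn n) :=
  have ⟨_, _, _, hij, hik, hjk⟩ := exists_three_ne hn
  .of_stdVec_sub_mem (fun _ hw => norm_sq_le_of_mem_rootsBn hw) hij hik hjk
    (.inl (stdVec_sub_stdVec_mem_rootsDn hij)) (.inl (stdVec_sub_stdVec_mem_rootsDn hik))

theorem hasNonorthogonalLongRoots_rootsDn {n : ℕ} (hn : 3 ≤ n) :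
    HasNonorthogonalLongRoots (rootsDn n) :=
  have ⟨_, _, _, hij, hik, hjk⟩ := exists_three_ne hn
  .of_stdVec_sub_mem (fun _ hw => (norm_sq_of_mem_rootsDn hw).le) hij hik hjk
    (stdVec_sub_stdVec_mem_rootsDn hij) (stdVec_sub_stdVec_mem_rootsDn hik)

theorem hasNonorthogonalLongRoots_rootsE6 : HasNonorthogonalLongRoots rootsE6 :=
  .of_stdVec_sub_mem (fun _ hw => (norm_sq_of_mem_rootsE8 hw.1.1).le)
    (i := 0) (j := 1) (k := 2) (by decide) (by decide) (by decide)
    (stdVec_sub_stdVec_mem_rootsE6 (by decide) (by decide) (by decide))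
    (stdVec_sub_stdVec_mem_rootsE6 (by decide) (by decide) (by decide))

theorem hasNonorthogonalLongRoots_rootsE7 : HasNonorthogonalLongRoots rootsE7 :=
  .of_stdVec_sub_mem (fun _ hw => (norm_sq_of_mem_rootsE8 hw.1).le)
    (i := 0) (j := 1) (k := 2) (by decide) (by decide) (by decide)
    (stdVec_sub_stdVec_mem_rootsE6 (by decide) (by decide) (by decide)).1
    (stdVec_sub_stdVec_mem_rootsE6 (by decide) (by decide) (by decide)).1

theorem hasNonorthogonalLongRoots_rootsE8 : HasNonorthogonalLongRoots rootsE8 :=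
  .of_stdVec_sub_mem (fun _ hw => (norm_sq_of_mem_rootsE8 hw).le)
    (i := 0) (j := 1) (k := 2) (by decide) (by decide) (by decide)
    (stdVec_sub_stdVec_mem_rootsE6 (by decide) (by decide) (by decide)).1.1
    (stdVec_sub_stdVec_mem_rootsE6 (by decide) (by decide) (by decide)).1.1

theorem hasNonorthogonalLongRoots_rootsF4 : HasNonorthogonalLongRoots rootsF4 :=
  .of_stdVec_sub_mem (fun _ hw => norm_sq_le_of_mem_rootsF4 hw)
    (i := 0) (j := 1) (k := 2) (by decide) (by decide) (by decide)
    (.inl (.inl (stdVec_sub_stdVec_mem_rootsDn (by decide))))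
    (.inl (.inl (stdVec_sub_stdVec_mem_rootsDn (by decide))))

theorem hasNonorthogonalLongRoots_rootsG2 : HasNonorthogonalLongRoots rootsG2 := by
  have hinner : ⟪(2 : ℝ) • stdVec (0 : Fin 3) - stdVec 1 - stdVec 2,
      (2 : ℝ) • stdVec 1 - stdVec 0 - stdVec 2⟫ = -3 := by
    simp only [inner_sub_left, inner_sub_right, real_inner_smul_left, real_inner_smul_right,
      inner_stdVec_stdVec, Fin.reduceEq, ↓reduceIte]
    norm_num
  refine .of_norm_sq (.inr ⟨0, 1, 2, by decide, by decide, by decide, .inl rfl⟩)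
    (.inr ⟨1, 0, 2, by decide, by decide, by decide, .inl rfl⟩)
    (fun _ hw => norm_sq_le_of_mem_rootsG2 hw)
    (norm_sq_two_smul_stdVec_sub_stdVec_sub_stdVec (by decide) (by decide) (by decide))
    (norm_sq_two_smul_stdVec_sub_stdVec_sub_stdVec (by decide) (by decide) (by decide)) ?_ ?_
    <;> norm_num [hinner]

/-- Every irreducible root system of type different from `A₁` and from `C_n`
(`n ≥ 2`) contains a pair of linearly independent, non-orthogonal long roots. -/
theorem exists_nonorthogonal_long_roots (t : RSType) (hval : t.valid)
    (hA1 : t ≠ .A 1) (hC : ∀ n, t ≠ .C n) :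
    ∃ lam alpha : EuclideanSpace ℝ (Fin t.dim),
      lam ∈ longRoots t.roots ∧ alpha ∈ longRoots t.roots ∧
      LinearIndependent ℝ ![lam, alpha] ∧ ⟪lam, alpha⟫ ≠ 0 := by
  cases t with
  | A n =>
    have hn : n ≠ 1 := by
      rintro rfl
      exact hA1 rfl
    exact hasNonorthogonalLongRoots_rootsAn (by change 1 ≤ n at hval; omega)
  | B n => exact hasNonorthogonalLongRoots_rootsBn hval
  | C n => exact absurd rfl (hC n)
  | D n => exact hasNonorthogonalLongRoots_rootsDn hval
  | E6 => exact hasNonorthogonalLongRoots_rootsE6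
  | E7 => exact hasNonorthogonalLongRoots_rootsE7
  | E8 => exact hasNonorthogonalLongRoots_rootsE8
  | F4 => exact hasNonorthogonalLongRoots_rootsF4
  | G2 => exact hasNonorthogonalLongRoots_rootsG2
end

section
/- Let V be a real inner product space with quaternionic structure I, J, K (I² = J² = K² = IJK = −id, all g-skew) and let R be an algebraic curvature tensor on V whose commutator with I satisfies [R_{X,Y}, I] = c·( g(JX,Y)K − g(KX,Y)J ) for all X, Y, where c = κ/(4n(n+2)). Then g(R_{X,IX}IY, Y) + 2c( g(JX,Y)² + g(KX,Y)² ) = g(R_{X,Y}Y, X) + g(R_{X,IY}IY, X) for all X, Y ∈ V. -/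
open RealInnerProductSpace

/-!
Pair the first Bianchi identity for `(X, IX, IY)` with `Y`. Pair symmetry turns the two other
terms into `g(R_{X,Y}IX, IY)` and `g(R_{X,IY}IX, I(IY))`. Since `I` is an isometry, the
commutator hypothesis says that `g(R_{A,B}IA, IB)` differs from `g(R_{A,B}A, B)` by
`c(g(JA,B)² + g(KA,B)²)`, a quantity unchanged under `B ↦ IB`.
-/

section QuaternionAlgebra

variable {S M : Type*} [Ring S] [AddCommGroup M] [Module S M] {I J K : M →ₗ[S] M}

lemma I_J_eq_K (hK2 : ∀ v, K (K v) = -v) (hIJK : ∀ v, I (J (K v)) = -v) (v : M) :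
    I (J v) = K v := by
  simpa [hK2] using hIJK (-K v)

lemma I_K_eq_neg_J (hI2 : ∀ v, I (I v) = -v) (hIJ : ∀ v, I (J v) = K v) (v : M) :
    I (K v) = -J v := by
  rw [← hIJ, hI2]

end QuaternionAlgebra

section InnerProduct

variable {V : Type*} [NormedAddCommGroup V] [InnerProductSpace ℝ V] {I J K : V →ₗ[ℝ] V}

lemma inner_I_I (hI2 : ∀ v, I (I v) = -v) (hIskew : ∀ v w, ⟪I v, w⟫ = -⟪v, I w⟫) (u w : V) :
    ⟪I u, I w⟫ = ⟪u, w⟫ := by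
  rw [hIskew, hI2, inner_neg_right, neg_neg]

lemma inner_J_I_right (hIskew : ∀ v w, ⟪I v, w⟫ = -⟪v, I w⟫) (hIJ : ∀ v, I (J v) = K v)
    (u w : V) : ⟪J u, I w⟫ = -⟪K u, w⟫ := by
  rw [← hIJ, hIskew, neg_neg]

lemma inner_K_I_right (hIskew : ∀ v w, ⟪I v, w⟫ = -⟪v, I w⟫) (hIK : ∀ v, I (K v) = -J v)
    (u w : V) : ⟪K u, I w⟫ = ⟪J u, w⟫ := by
  rw [← neg_neg ⟪K u, I w⟫, ← hIskew, hIK, inner_neg_left, neg_neg]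

lemma sq_inner_J_add_sq_inner_K_I_right (hIskew : ∀ v w, ⟪I v, w⟫ = -⟪v, I w⟫)
    (hIJ : ∀ v, I (J v) = K v) (hIK : ∀ v, I (K v) = -J v) (u w : V) :
    ⟪J u, I w⟫ ^ 2 + ⟪K u, I w⟫ ^ 2 = ⟪J u, w⟫ ^ 2 + ⟪K u, w⟫ ^ 2 := by
  rw [inner_J_I_right hIskew hIJ, inner_K_I_right hIskew hIK]
  ring

variable {R : V →ₗ[ℝ] V →ₗ[ℝ] V →ₗ[ℝ] V} {c : ℝ}

lemma inner_curvature_I_I (hI2 : ∀ v, I (I v) = -v)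
    (hIskew : ∀ v w, ⟪I v, w⟫ = -⟪v, I w⟫)
    (hIJ : ∀ v, I (J v) = K v) (hIK : ∀ v, I (K v) = -J v)
    (hcomm : ∀ X Y U, R X Y (I U) - I (R X Y U) = c • (⟪J X, Y⟫ • K U - ⟪K X, Y⟫ • J U))
    (A B U W : V) :
    ⟪R A B (I U), I W⟫ = ⟪R A B U, W⟫ + c * (⟪J A, B⟫ * ⟪J U, W⟫ + ⟪K A, B⟫ * ⟪K U, W⟫) := by
  rw [← sub_add_cancel (R A B (I U)) (I (R A B U)), hcomm, inner_add_left, inner_I_I hI2 hIskew,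
    inner_smul_left, inner_sub_left, real_inner_smul_left, real_inner_smul_left,
    inner_K_I_right hIskew hIK, inner_J_I_right hIskew hIJ, RCLike.conj_to_real]
  ring

lemma inner_curvature_I_self_I (hI2 : ∀ v, I (I v) = -v)
    (hIskew : ∀ v w, ⟪I v, w⟫ = -⟪v, I w⟫)
    (hIJ : ∀ v, I (J v) = K v) (hIK : ∀ v, I (K v) = -J v)
    (hskew2 : ∀ X Y U W, ⟪R X Y U, W⟫ = -⟪R X Y W, U⟫)
    (hcomm : ∀ X Y U, R X Y (I U) - I (R X Y U) = c • (⟪J X, Y⟫ • K U - ⟪K X, Y⟫ • J U))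
    (A B : V) :
    ⟪R A B (I A), I B⟫ = -⟪R A B B, A⟫ + c * (⟪J A, B⟫ ^ 2 + ⟪K A, B⟫ ^ 2) := by
  rw [inner_curvature_I_I hI2 hIskew hIJ hIK hcomm, hskew2]
  ring

end InnerProduct

theorem qk_bisectional_vs_sectional_general {V : Type*} [NormedAddCommGroup V]
    [InnerProductSpace ℝ V] (n : ℕ) (κ : ℝ)
    (I J K : V →ₗ[ℝ] V)
    (hI2 : ∀ v, I (I v) = -v)
    (hK2 : ∀ v, K (K v) = -v) (hIJK : ∀ v, I (J (K v)) = -v)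
    (hIskew : ∀ v w, ⟪I v, w⟫ = -⟪v, I w⟫)
    (Rop : V →ₗ[ℝ] V →ₗ[ℝ] V →ₗ[ℝ] V)
    (hskew1 : ∀ X Y U W, ⟪Rop X Y U, W⟫ = -⟪Rop Y X U, W⟫)
    (hskew2 : ∀ X Y U W, ⟪Rop X Y U, W⟫ = -⟪Rop X Y W, U⟫)
    (hpair : ∀ X Y U W, ⟪Rop X Y U, W⟫ = ⟪Rop U W X, Y⟫)
    (hbianchi : ∀ X Y U, Rop X Y U + Rop Y U X + Rop U X Y = 0)
    (hcomm : ∀ X Y U, Rop X Y (I U) - I (Rop X Y U) =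
      (κ / (4 * (n : ℝ) * ((n : ℝ) + 2))) •
        (⟪J X, Y⟫ • K U - ⟪K X, Y⟫ • J U)) :
    ∀ X Y : V,
      ⟪Rop X (I X) (I Y), Y⟫ +
        2 * (κ / (4 * (n : ℝ) * ((n : ℝ) + 2))) *
          (⟪J X, Y⟫ ^ 2 + ⟪K X, Y⟫ ^ 2) =
      ⟪Rop X Y Y, X⟫ + ⟪Rop X (I Y) (I Y), X⟫ := by
  intro X Y
  have hIJ := I_J_eq_K hK2 hIJK
  have hIK := I_K_eq_neg_J hI2 hIJ
  have key := inner_curvature_I_self_I hI2 hIskew hIJ hIK hskew2 hcomm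
  have hbianchiY : ⟪Rop X (I X) (I Y), Y⟫ + ⟪Rop (I X) (I Y) X, Y⟫ +
      ⟪Rop (I Y) X (I X), Y⟫ = 0 := by
    simpa only [inner_add_left, inner_zero_left] using congrArg (⟪·, Y⟫) (hbianchi X (I X) (I Y))
  have hsecond : ⟪Rop (I X) (I Y) X, Y⟫ = ⟪Rop X Y (I X), I Y⟫ := hpair ..
  have hthird : ⟪Rop (I Y) X (I X), Y⟫ = ⟪Rop X (I Y) (I X), I (I Y)⟫ := by
    rw [hskew1, hI2, inner_neg_right]
  rw [hsecond, hthird, key, key, sq_inner_J_add_sq_inner_K_I_right hIskew hIJ hIK] at hbianchiY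
  linear_combination hbianchiY

/-- Let `V` carry a quaternionic structure `I, J, K` (orthogonal complex
structures with quaternion relations) and let `R` be an algebraic curvature
tensor whose curvature operator satisfies the quaternion-Kähler commutator
identity `[R_{X,Y}, I] = c(g(JX,Y)K − g(KX,Y)J)` with `c = κ/(4n(n+2))`.
Then `g(R_{X,IX}IY, Y) + 2c(g(JX,Y)² + g(KX,Y)²)
= g(R_{X,Y}Y, X) + g(R_{X,IY}IY, X)` for all `X, Y`. -/
theorem qk_bisectional_vs_sectional {V : Type*} [NormedAddCommGroup V]
    [InnerProductSpace ℝ V] (n : ℕ) (hn : 0 < n) (κ : ℝ)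
    (I J K : V →ₗ[ℝ] V)
    (hI2 : ∀ v, I (I v) = -v) (hJ2 : ∀ v, J (J v) = -v)
    (hK2 : ∀ v, K (K v) = -v) (hIJK : ∀ v, I (J (K v)) = -v)
    (hIskew : ∀ v w, ⟪I v, w⟫ = -⟪v, I w⟫)
    (hJskew : ∀ v w, ⟪J v, w⟫ = -⟪v, J w⟫)
    (hKskew : ∀ v w, ⟪K v, w⟫ = -⟪v, K w⟫)
    (Rop : V →ₗ[ℝ] V →ₗ[ℝ] V →ₗ[ℝ] V)
    (hskew1 : ∀ X Y U W, ⟪Rop X Y U, W⟫ = -⟪Rop Y X U, W⟫)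
    (hskew2 : ∀ X Y U W, ⟪Rop X Y U, W⟫ = -⟪Rop X Y W, U⟫)
    (hpair : ∀ X Y U W, ⟪Rop X Y U, W⟫ = ⟪Rop U W X, Y⟫)
    (hbianchi : ∀ X Y U, Rop X Y U + Rop Y U X + Rop U X Y = 0)
    (hcomm : ∀ X Y U, Rop X Y (I U) - I (Rop X Y U) =
      (κ / (4 * (n : ℝ) * ((n : ℝ) + 2))) •
        (⟪J X, Y⟫ • K U - ⟪K X, Y⟫ • J U)) :
    ∀ X Y : V,
      ⟪Rop X (I X) (I Y), Y⟫ +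
        2 * (κ / (4 * (n : ℝ) * ((n : ℝ) + 2))) *
          (⟪J X, Y⟫ ^ 2 + ⟪K X, Y⟫ ^ 2) =
      ⟪Rop X Y Y, X⟫ + ⟪Rop X (I Y) (I Y), X⟫ :=
  qk_bisectional_vs_sectional_general n κ I J K hI2 hK2 hIJK hIskew Rop hskew1 hskew2 hpair hbianchi
    hcomm
end
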